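/- arXiv:2104.10755 — 4 statements merged into one kernel-verified Lean document; each statement's English description precedes it below -/
import Mathlib

section
/- Let n ≥ 2 be an integer and let S be a nonempty subset of {1, …, ⌊n/2⌋}. If the circulant graph Circ(n,S) is a nut graph, then n/2 ∉ S (i.e., every element of S is strictly smaller than n/2), the number of odd elements of S equals the number of even elements of S, and consequently, writing t for this common number, t > 0 and Circ(n,S) is 4t-regular. -/
/-!
Rotation `j ↦ j + 1` is an automorphism of `Circ(n,S)`, so it maps the one-dimensional kernel
to itself: a kernel vector satisfies `v (j + 1) = c * v j`, hence `v j = c ^ j * v 0` with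
`c ^ n = 1`, i.e. `c = ±1` over `ℚ`. The neighbours of `0` are `S ∪ (n - S)`, so row `0` of
`A v = 0` reads `∑_{m ∈ S ∪ (n - S)} c ^ m = 0`. For `c = 1` this says the degree vanishes.
For `c = -1` (and `n` even) the terms of `s` and `n - s` agree, so the sum is
`2 ∑_{s ∈ S} (-1) ^ s`, minus the single term of `n / 2` if `n / 2 ∈ S`; parity excludes the
latter, and `∑_{s ∈ S} (-1) ^ s = #even - #odd = 0`. Finally the degree is
`#(S ∪ (n - S)) = 2 #S = 4 t`.
-/

open Finset Polynomial

/-- The circulant graph `Circ(n, S)` on the vertex set `Fin n` (identified with `ℤ/nℤ`):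
distinct vertices `i` and `j` are adjacent iff `i - j ≡ ±s (mod n)` for some `s ∈ S`. -/
def circ (n : ℕ) (S : Finset ℕ) : SimpleGraph (Fin n) where
  Adj i j := i ≠ j ∧ ∃ s ∈ S,
      ((i.val : ZMod n) - (j.val : ZMod n) = (s : ZMod n) ∨
        (j.val : ZMod n) - (i.val : ZMod n) = (s : ZMod n))
  symm := by
    constructor
    rintro i j ⟨hij, s, hs, h⟩
    exact ⟨hij.symm, s, hs, h.symm⟩
  loopless := by
    constructor
    rintro i ⟨h, -⟩
    exact h rfl

open Classical in
/-- The adjacency matrix (over `ℚ`) of a graph on `Fin n`. -/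
noncomputable def adjMat {n : ℕ} (G : SimpleGraph (Fin n)) :
    Matrix (Fin n) (Fin n) ℚ :=
  Matrix.of fun i j => if G.Adj i j then 1 else 0

/-- A graph on at least two vertices is a nut graph if the kernel of its rational
adjacency matrix is one-dimensional, spanned by a vector having no zero entries. -/
def IsNutGraph {n : ℕ} (G : SimpleGraph (Fin n)) : Prop :=
  2 ≤ n ∧ ∃ v : Fin n → ℚ, (∀ i, v i ≠ 0) ∧ (adjMat G).mulVec v = 0 ∧
    ∀ w : Fin n → ℚ, (adjMat G).mulVec w = 0 → ∃ c : ℚ, w = c • v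

open Classical in
/-- The degree of a vertex of a graph on `Fin n`. -/
noncomputable def degOf {n : ℕ} (G : SimpleGraph (Fin n)) (v : Fin n) : ℕ :=
  (Finset.univ.filter fun w => G.Adj v w).card

/-- A graph is `d`-regular if every vertex has degree `d`. -/
def IsRegularGraph {n : ℕ} (G : SimpleGraph (Fin n)) (d : ℕ) : Prop :=
  ∀ v, degOf G v = d

/-- The eigenvalue polynomial `P(y) = ∑_{k=1}^{n-1} a_k y^k`, where `a_k = 1` iff
`k ∈ S` or `n - k ∈ S`. -/
noncomputable def Pval (n : ℕ) (S : Finset ℕ) (y : ℂ) : ℂ :=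
  ∑ k ∈ Finset.Ico 1 n, (if k ∈ S ∨ n - k ∈ S then (1 : ℂ) else 0) * y ^ k

/-- `ω = e^{2πi/n}`. -/
noncomputable def omegaC (n : ℕ) : ℂ :=
  Complex.exp (2 * (Real.pi : ℂ) * Complex.I / (n : ℂ))

/-- The generator set `S_t = {1, …, 2t+1} \ {t}`. -/
def St (t : ℕ) : Finset ℕ := (Finset.Icc 1 (2 * t + 1)).erase t

/-- The polynomial `Q_t(y) = y^{4t+3} − y^{3t+2} + y^{3t+1} − y^{2t+2} + y^{2t+1}
− y^{t+2} + y^{t+1} − 1` over `ℤ`. -/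
noncomputable def Qt (t : ℕ) : Polynomial ℤ :=
  X ^ (4 * t + 3) - X ^ (3 * t + 2) + X ^ (3 * t + 1) - X ^ (2 * t + 2)
    + X ^ (2 * t + 1) - X ^ (t + 2) + X ^ (t + 1) - 1

open Matrix

namespace ZMod

lemma natCast_eq_natCast_iff_of_lt {n a b : ℕ} (ha : a < n) (hb : b < n) :
    (a : ZMod n) = b ↔ a = b := by
  rw [natCast_eq_natCast_iff', Nat.mod_eq_of_lt ha, Nat.mod_eq_of_lt hb]

lemma neg_natCast_eq_natCast_iff {n a b : ℕ} (ha : a < n) (hb : 0 < b) (hbn : b ≤ n) :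
    -(a : ZMod n) = b ↔ a = n - b := by
  rw [neg_eq_iff_eq_neg, ← natCast_eq_natCast_iff_of_lt ha (by omega), Nat.cast_sub hbn,
    natCast_self, zero_sub]

end ZMod

lemma Matrix.mulVec_comp_add_right {ι R : Type*} [AddGroup ι] [Fintype ι]
    [NonUnitalNonAssocSemiring R] {M : Matrix ι ι R} {k : ι}
    (hM : ∀ i j, M (i + k) (j + k) = M i j) (v : ι → R) :
    M *ᵥ (fun j => v (j + k)) = fun i => (M *ᵥ v) (i + k) := by
  ext i
  simp only [Matrix.mulVec, dotProduct]
  rw [← Equiv.sum_comp (Equiv.addRight k) (fun j => M (i + k) j * v j)]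
  simp only [Equiv.coe_addRight, hM]

lemma circ_adj_add_right {n : ℕ} {S : Finset ℕ} (i j k : Fin n) :
    (circ n S).Adj (i + k) (j + k) ↔ (circ n S).Adj i j := by
  have hval : ∀ a : Fin n, (((a + k).val : ℕ) : ZMod n) = a.val + k.val := fun a => by
    rw [Fin.val_add, ZMod.natCast_mod, Nat.cast_add]
  simp only [circ, ne_eq, add_left_inj, hval, add_sub_add_right_eq_sub]

lemma adjMat_mulVec_apply {n : ℕ} (G : SimpleGraph (Fin n)) [DecidableRel G.Adj]
    (v : Fin n → ℚ) (i : Fin n) :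
    (adjMat G *ᵥ v) i = ∑ j ∈ univ.filter (G.Adj i), v j := by
  simp only [adjMat, Matrix.mulVec, dotProduct, Matrix.of_apply, ite_mul, one_mul, zero_mul,
    Finset.sum_filter]

namespace Fin

variable {n : ℕ} [NeZero n] {R : Type*} [Monoid R] {v : Fin n → R} {c : R}

open Fin.NatCast in
lemma apply_natCast_eq_pow_mul (h : ∀ j, v (j + 1) = c * v j) (m : ℕ) :
    v m = c ^ m * v 0 := by
  induction m with
  | zero => simp
  | succ m ih => rw [Nat.cast_succ, h, ih, pow_succ', mul_assoc]

lemma apply_eq_pow_val_mul (h : ∀ j, v (j + 1) = c * v j) (j : Fin n) :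
    v j = c ^ j.val * v 0 := by
  simpa using apply_natCast_eq_pow_mul h j.val

lemma pow_card_mul_apply_zero (h : ∀ j, v (j + 1) = c * v j) : c ^ n * v 0 = v 0 := by
  simpa using (apply_natCast_eq_pow_mul h n).symm

end Fin

lemma IsNutGraph.exists_shift_eq_mul {n : ℕ} [NeZero n] {G : SimpleGraph (Fin n)}
    (hG : IsNutGraph G) (hinv : ∀ i j : Fin n, G.Adj (i + 1) (j + 1) ↔ G.Adj i j) :
    ∃ v : Fin n → ℚ, (∀ i, v i ≠ 0) ∧ adjMat G *ᵥ v = 0 ∧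
      ∃ c : ℚ, ∀ j, v (j + 1) = c * v j := by
  obtain ⟨-, v, hv, hker, hspan⟩ := hG
  have hinvMat : ∀ i j, adjMat G (i + 1) (j + 1) = adjMat G i j := fun i j => by
    simp only [adjMat, Matrix.of_apply]
    congr 1
    exact propext (hinv i j)
  have hshift : adjMat G *ᵥ (fun j => v (j + 1)) = 0 := by
    rw [Matrix.mulVec_comp_add_right hinvMat, hker]
    rfl
  obtain ⟨c, hc⟩ := hspan _ hshift
  exact ⟨v, hv, hker, c, fun j => congrFun hc j⟩

section ConnectionSet

variable {n : ℕ} {S : Finset ℕ}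

lemma circ_adj_zero_iff [NeZero n] (hS : S ⊆ Icc 1 (n / 2)) (j : Fin n) :
    (circ n S).Adj 0 j ↔ j.val ∈ S ∪ S.image (n - ·) := by
  have hbound : ∀ s ∈ S, 0 < s ∧ s ≤ n / 2 := fun s hs => by
    have := mem_Icc.mp (hS hs)
    omega
  have hj := j.isLt
  simp only [circ, Fin.val_zero, Nat.cast_zero, zero_sub, sub_zero, mem_union, mem_image]
  constructor
  · rintro ⟨-, s, hs, h | h⟩
    · have := hbound s hs
      rw [ZMod.neg_natCast_eq_natCast_iff hj (by omega) (by omega)] at h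
      exact Or.inr ⟨s, hs, h.symm⟩
    · have := hbound s hs
      rw [ZMod.natCast_eq_natCast_iff_of_lt hj (by omega)] at h
      exact Or.inl (h ▸ hs)
  · rintro (hjS | ⟨s, hs, hsj⟩)
    · have := hbound _ hjS
      exact ⟨Fin.ne_of_val_ne (by simp only [Fin.val_zero]; omega), j, hjS, Or.inr rfl⟩
    · have := hbound s hs
      refine ⟨Fin.ne_of_val_ne (by simp only [Fin.val_zero]; omega), s, hs, Or.inl ?_⟩
      exact (ZMod.neg_natCast_eq_natCast_iff hj (by omega) (by omega)).mpr hsj.symm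

lemma map_filter_circ_adj_zero [NeZero n] (hS : S ⊆ Icc 1 (n / 2))
    [DecidablePred ((circ n S).Adj 0)] :
    (univ.filter ((circ n S).Adj 0)).map Fin.valEmbedding = S ∪ S.image (n - ·) := by
  ext m
  simp only [mem_map, mem_filter, mem_univ, true_and, Fin.valEmbedding_apply,
    circ_adj_zero_iff hS]
  refine ⟨fun ⟨j, hj, hjm⟩ => hjm ▸ hj, fun hm => ⟨⟨m, ?_⟩, hm, rfl⟩⟩
  have hn := NeZero.pos n
  rcases mem_union.mp hm with hm | hm
  · have := mem_Icc.mp (hS hm)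
    omega
  · obtain ⟨s, hs, rfl⟩ := mem_image.mp hm
    have := mem_Icc.mp (hS hs)
    omega

lemma circ_degOf [NeZero n] (hS : S ⊆ Icc 1 (n / 2)) (u : Fin n) :
    degOf (circ n S) u = #(S ∪ S.image (n - ·)) := by
  classical
  rw [← map_filter_circ_adj_zero hS, card_map, degOf]
  refine (card_equiv (Equiv.addRight u) fun j => ?_).symm
  simp [← circ_adj_add_right 0 j u]

lemma sum_pow_union_image_sub_eq_zero [NeZero n] (hS : S ⊆ Icc 1 (n / 2))
    {v : Fin n → ℚ} {c : ℚ} (hker : adjMat (circ n S) *ᵥ v = 0) (hv : v 0 ≠ 0)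
    (hgeom : ∀ j : Fin n, v j = c ^ j.val * v 0) :
    ∑ m ∈ S ∪ S.image (n - ·), c ^ m = 0 := by
  classical
  have hrow : (∑ m ∈ S ∪ S.image (n - ·), c ^ m) * v 0 = (adjMat (circ n S) *ᵥ v) 0 := by
    rw [← map_filter_circ_adj_zero hS, sum_map, sum_mul, adjMat_mulVec_apply]
    exact sum_congr rfl fun j _ => (hgeom j).symm
  rw [hker] at hrow
  exact (mul_eq_zero.mp hrow).resolve_right hv

lemma inter_image_sub_eq_filter (hS : S ⊆ Icc 1 (n / 2)) :
    S ∩ S.image (n - ·) = S.filter (2 * · = n) := by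
  ext x
  simp only [mem_inter, mem_image, mem_filter]
  constructor
  · rintro ⟨hx, s, hs, hsx⟩
    have := mem_Icc.mp (hS hx)
    have := mem_Icc.mp (hS hs)
    exact ⟨hx, by omega⟩
  · rintro ⟨hx, hx2⟩
    exact ⟨hx, x, hx, by omega⟩

lemma injOn_sub_of_subset_Icc (hS : S ⊆ Icc 1 (n / 2)) : Set.InjOn (n - ·) S := by
  intro a ha b hb hab
  have := mem_Icc.mp (hS ha)
  have := mem_Icc.mp (hS hb)
  simp only at hab
  omega

lemma card_union_image_sub (hS : S ⊆ Icc 1 (n / 2)) (hlt : ∀ s ∈ S, 2 * s < n) :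
    #(S ∪ S.image (n - ·)) = 2 * #S := by
  have hdisj : Disjoint S (S.image (n - ·)) := by
    rw [disjoint_iff_inter_eq_empty, inter_image_sub_eq_filter hS]
    exact filter_false_of_mem fun s hs => (hlt s hs).ne
  rw [card_union_of_disjoint hdisj, card_image_of_injOn (injOn_sub_of_subset_Icc hS), two_mul]

lemma sum_neg_one_pow_image_sub (hn : Even n) (hS : S ⊆ Icc 1 (n / 2)) :
    ∑ m ∈ S.image (n - ·), (-1 : ℤ) ^ m = ∑ s ∈ S, (-1 : ℤ) ^ s := by
  rw [sum_image (injOn_sub_of_subset_Icc hS)]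
  refine sum_congr rfl fun s hs => ?_
  have := mem_Icc.mp (hS hs)
  rw [neg_one_pow_eq_pow_mod_two, neg_one_pow_eq_pow_mod_two (n := s)]
  obtain ⟨k, rfl⟩ := hn
  congr 1
  omega

lemma forall_two_mul_lt_and_sum_neg_one_pow_eq_zero (hn : Even n) (hS : S ⊆ Icc 1 (n / 2))
    (h : ∑ m ∈ S ∪ S.image (n - ·), (-1 : ℤ) ^ m = 0) :
    (∀ s ∈ S, 2 * s < n) ∧ ∑ s ∈ S, (-1 : ℤ) ^ s = 0 := by
  have key := sum_union_inter (s₁ := S) (s₂ := S.image (n - ·)) (f := fun m => (-1 : ℤ) ^ m)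
  rw [h, inter_image_sub_eq_filter hS, sum_neg_one_pow_image_sub hn hS, zero_add] at key
  have hlt : ∀ s ∈ S, 2 * s < n := by
    intro s hs
    by_contra hle
    have hs2 : 2 * s = n := by
      have := mem_Icc.mp (hS hs)
      omega
    have hsingle : S.filter (2 * · = n) = {s} := by
      refine eq_singleton_iff_unique_mem.mpr ⟨mem_filter.mpr ⟨hs, hs2⟩, fun t ht => ?_⟩
      have := (mem_filter.mp ht).2
      omega
    rw [hsingle, sum_singleton] at key
    rcases neg_one_pow_eq_or ℤ s with h1 | h1 <;> omega
  refine ⟨hlt, ?_⟩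
  rw [filter_false_of_mem fun s hs => (hlt s hs).ne, sum_empty] at key
  omega

end ConnectionSet

lemma Finset.sum_neg_one_pow_eq_card_filter_even_sub_card_filter_odd (S : Finset ℕ) :
    ∑ s ∈ S, (-1 : ℤ) ^ s = #(S.filter fun s => Even s) - #(S.filter fun s => Odd s) := by
  rw [← sum_filter_add_sum_filter_not S (fun s => Even s),
    filter_congr fun s _ => Nat.not_even_iff_odd,
    sum_congr rfl fun s (hs : s ∈ S.filter fun s => Even s) => (mem_filter.mp hs).2.neg_one_pow,
    sum_congr rfl fun s (hs : s ∈ S.filter fun s => Odd s) => (mem_filter.mp hs).2.neg_one_pow]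
  simp only [sum_const, nsmul_eq_mul, mul_one, mul_neg]
  ring

theorem circulant_nut_equally_many_even_odd_general
    (n : ℕ) (S : Finset ℕ) (hS : S.Nonempty)
    (hSsub : S ⊆ Finset.Icc 1 (n / 2))
    (hnut : IsNutGraph (circ n S)) :
    (∀ s ∈ S, 2 * s < n) ∧
    (S.filter fun s => Odd s).card = (S.filter fun s => Even s).card ∧
    0 < (S.filter fun s => Odd s).card ∧
    IsRegularGraph (circ n S) (4 * (S.filter fun s => Odd s).card) := by
  have : NeZero n := ⟨by have := hnut.1; omega⟩
  obtain ⟨v, hv, hker, c, hshift⟩ :=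
    hnut.exists_shift_eq_mul fun i j => circ_adj_add_right i j 1
  have hrow :=
    sum_pow_union_image_sub_eq_zero hSsub hker (hv 0) (Fin.apply_eq_pow_val_mul hshift)
  have hcn : c ^ n = 1 :=
    mul_right_cancel₀ (hv 0) ((Fin.pow_card_mul_apply_zero hshift).trans (one_mul _).symm)
  obtain ⟨hlt, hsum⟩ : (∀ s ∈ S, 2 * s < n) ∧ ∑ s ∈ S, (-1 : ℤ) ^ s = 0 := by
    rcases pow_eq_one_iff_cases.mp hcn with hn0 | rfl | ⟨rfl, hn⟩
    · exact absurd hn0 (NeZero.ne n)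
    · simp only [one_pow, sum_const, nsmul_eq_mul, mul_one, Nat.cast_eq_zero, card_eq_zero,
        union_eq_empty, image_eq_empty, and_self] at hrow
      exact absurd hrow hS.ne_empty
    · exact forall_two_mul_lt_and_sum_neg_one_pow_eq_zero hn hSsub (by exact_mod_cast hrow)
  have hcard : #(S.filter fun s => Odd s) + #(S.filter fun s => Even s) = #S := by
    rw [← filter_congr fun s _ => Nat.not_odd_iff_even, card_filter_add_card_filter_not]
  rw [sum_neg_one_pow_eq_card_filter_even_sub_card_filter_odd] at hsum
  refine ⟨hlt, by omega, by have := hS.card_pos; omega, fun u => ?_⟩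
  rw [circ_degOf hSsub, card_union_image_sub hSsub hlt]
  omega

/-- If `Circ(n,S)` is a nut graph, then every element of `S` is
strictly smaller than `n/2`, the number of odd elements of `S` equals the number of
even elements of `S`, and for this common number `t` we have `t > 0` and `Circ(n,S)`
is `4t`-regular. -/
theorem circulant_nut_equally_many_even_odd
    (n : ℕ) (hn : 2 ≤ n) (S : Finset ℕ) (hS : S.Nonempty)
    (hSsub : S ⊆ Finset.Icc 1 (n / 2))
    (hnut : IsNutGraph (circ n S)) :
    (∀ s ∈ S, 2 * s < n) ∧
    (S.filter fun s => Odd s).card = (S.filter fun s => Even s).card ∧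
    0 < (S.filter fun s => Odd s).card ∧
    IsRegularGraph (circ n S) (4 * (S.filter fun s => Odd s).card) :=
  circulant_nut_equally_many_even_odd_general n S hS hSsub hnut
end

section
/- Let n be an even integer, n ≥ 4, and let S ⊆ {1, …, n/2 − 1} contain equally many odd and even elements (say t ≥ 1 of each). Then the circulant graph Circ(n,S) is a nut graph if and only if P(ω^j) ≠ 0 for every j ∈ {1, …, n/2 − 1}. -/
open Finset Polynomial

/-!
The alternating vector `((-1)^i)` always lies in the kernel: by the symmetry `a_k = a_{n-k}`,
`P(-1) = 2 ∑_{s ∈ S} (-1)^s`, which vanishes because `S` has as many odd as even elements.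
The Fourier matrix `((ω^j)^i)` diagonalises the adjacency matrix with eigenvalues `P(ω^j)`;
since `P(1) = 2|S|` and `P(ω^{n-j}) = conj P(ω^j)`, the hypothesis makes `j = n/2` the only
zero eigenvalue, so the kernel is spanned by `((-1)^i)`. Conversely, applying `ℚ`-linear
functionals `ℂ → ℚ` to a complex kernel vector produces rational kernel vectors, so a
one-dimensional rational kernel forces every complex kernel vector to be proportional to
`((-1)^i)`; a Fourier vector with `ω^j ≠ -1` is not.
-/

open Matrix

theorem Matrix.mul_eq_mul_of_map_mulVec_eq_zero {K L m ι : Type*} [Field K] [CommRing L]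
    [Algebra K L] [Fintype ι] {A : Matrix m ι K} {v : ι → K}
    (hv : ∀ w, A *ᵥ w = 0 → ∃ c : K, w = c • v) {w : ι → L}
    (hw : A.map (algebraMap K L) *ᵥ w = 0) (i j : ι) :
    w i * algebraMap K L (v j) = w j * algebraMap K L (v i) := by
  rw [← sub_eq_zero, ← Module.forall_dual_apply_eq_zero_iff K]
  intro φ
  have hφw : A *ᵥ (φ ∘ w) = 0 := by
    ext k
    simpa [mulVec, dotProduct, ← Algebra.smul_def] using congrArg φ (congrFun hw k)
  obtain ⟨c, hc⟩ := hv _ hφw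
  have hφ : ∀ a b, φ (w a * algebraMap K L (v b)) = c * v a * v b := by
    intro a b
    rw [mul_comm, ← Algebra.smul_def, map_smul, ← Function.comp_apply (f := φ) (g := w), hc]
    simp [mul_comm]
  rw [map_sub, hφ, hφ]
  ring

theorem Matrix.exists_eq_smul_col_of_mul_eq_mul_diagonal {K ι : Type*} [Field K] [Fintype ι]
    [DecidableEq ι] {A F : Matrix ι ι K} {d : ι → K} (hF : IsUnit F.det)
    (hAF : A * F = F * diagonal d) {j₀ : ι} (hd : ∀ j, j ≠ j₀ → d j ≠ 0) {w : ι → K}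
    (hw : A *ᵥ w = 0) : ∃ c : K, w = c • F.col j₀ := by
  set c := F⁻¹ *ᵥ w
  have hFc : F *ᵥ c = w := by rw [mulVec_mulVec, mul_nonsing_inv _ hF, one_mulVec]
  have hdc : diagonal d *ᵥ c = 0 := by
    apply mulVec_injective_of_isUnit ((isUnit_iff_isUnit_det F).2 hF)
    rw [mulVec_mulVec, ← hAF, ← mulVec_mulVec, hFc, hw, mulVec_zero]
  have hc : c = Pi.single j₀ (c j₀) := by
    ext j
    by_cases hj : j = j₀
    · subst hj; simp
    · have := congrFun hdc j
      rw [mulVec_diagonal, Pi.zero_apply] at this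
      simp [hj, (mul_eq_zero.1 this).resolve_left (hd j hj)]
  refine ⟨c j₀, ?_⟩
  rw [← hFc, hc, mulVec_single]
  ext i
  simp [mul_comm]

theorem Matrix.map_mulVec_comp_eq_zero_iff {R S m ι : Type*} [Fintype ι] [NonAssocSemiring R]
    [NonAssocSemiring S] {f : R →+* S} (hf : Function.Injective f) (A : Matrix m ι R)
    (v : ι → R) : A.map f *ᵥ (f ∘ v) = 0 ↔ A *ᵥ v = 0 := by
  simp only [funext_iff, ← RingHom.map_mulVec, Pi.zero_apply, map_eq_zero_iff f hf]

theorem Finset.sum_neg_one_pow {R : Type*} [Ring R] (S : Finset ℕ) :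
    ∑ s ∈ S, (-1 : R) ^ s = #(S.filter Even) - #(S.filter Odd) := by
  rw [← sum_filter_add_sum_filter_not S Even]
  simp only [Nat.not_even_iff_odd]
  rw [sum_congr rfl fun s (hs : s ∈ S.filter Even) => (mem_filter.1 hs).2.neg_one_pow,
    sum_congr rfl fun s (hs : s ∈ S.filter Odd) => (mem_filter.1 hs).2.neg_one_pow]
  simp [sub_eq_add_neg]

section

variable {n : ℕ} {S : Finset ℕ}

theorem Pval_eq_sum_pow_add_pow (hS : ∀ s ∈ S, 0 < s ∧ 2 * s < n) (y : ℂ) :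
    Pval n S y = ∑ s ∈ S, (y ^ s + y ^ (n - s)) := by
  classical
  have hsupport : (Ico 1 n).filter (fun k => k ∈ S ∨ n - k ∈ S) = S ∪ S.image (n - ·) := by
    ext k
    simp only [mem_filter, mem_Ico, mem_union, mem_image]
    constructor
    · rintro ⟨hk, hkS | hkS⟩
      · exact Or.inl hkS
      · exact Or.inr ⟨n - k, hkS, by omega⟩
    · rintro (hkS | ⟨s, hs, rfl⟩)
      · have := hS k hkS
        exact ⟨by omega, Or.inl hkS⟩
      · have := hS s hs
        exact ⟨by omega, Or.inr (by rwa [Nat.sub_sub_self (by omega)])⟩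
  have hdisj : Disjoint S (S.image (n - ·)) := by
    rw [disjoint_left]
    intro a ha ha'
    obtain ⟨s, hs, rfl⟩ := mem_image.1 ha'
    have := hS s hs
    have := hS _ ha
    omega
  have hinj : Set.InjOn (n - ·) S := fun a ha b hb h => by
    have := hS a ha
    have := hS b hb
    simp only at h
    omega
  simp only [Pval, ite_mul, one_mul, zero_mul]
  rw [← sum_filter, hsupport, sum_union hdisj, sum_image hinj, sum_add_distrib]

theorem Pval_one_ne_zero (hS : ∀ s ∈ S, 0 < s ∧ 2 * s < n) (hne : S.Nonempty) :
    Pval n S 1 ≠ 0 := by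
  simpa [Pval_eq_sum_pow_add_pow hS] using hne.ne_empty

theorem Pval_neg_one (hS : ∀ s ∈ S, 0 < s ∧ 2 * s < n) (hn : Even n)
    (hcard : #(S.filter Odd) = #(S.filter Even)) : Pval n S (-1) = 0 := by
  have hpow : ∀ s ∈ S, (-1 : ℂ) ^ s + (-1) ^ (n - s) = 2 * (-1) ^ s := by
    intro s hs
    have hpar : Even (n - s) ↔ Even s :=
      (Nat.even_sub (by have := hS s hs; omega)).trans (iff_true_left hn)
    rw [neg_one_pow_congr hpar]
    ring
  rw [Pval_eq_sum_pow_add_pow hS, sum_congr rfl hpow, ← mul_sum, sum_neg_one_pow, hcard, sub_self,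
    mul_zero]

theorem Pval_inv {z : ℂ} (hz : z ^ n = 1) (hn : n ≠ 0) :
    Pval n S z⁻¹ = starRingEnd ℂ (Pval n S z) := by
  rw [Complex.inv_eq_conj (Complex.norm_eq_one_of_pow_eq_one hz hn)]
  simp [Pval, map_sum, apply_ite]

theorem isPrimitiveRoot_omegaC (hn : n ≠ 0) : IsPrimitiveRoot (omegaC n) n :=
  Complex.isPrimitiveRoot_exp n hn

theorem omegaC_pow_half (hn : n ≠ 0) (he : Even n) : omegaC n ^ (n / 2) = -1 := by
  have h2 : 2 ∣ n := even_iff_two_dvd.1 he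
  apply IsPrimitiveRoot.eq_neg_one_of_two_right
  simpa [Nat.div_div_self h2 hn] using
    (isPrimitiveRoot_omegaC hn).pow_of_dvd (by omega) (Nat.div_dvd_of_dvd h2)

theorem omegaC_pow_pow_self (j : ℕ) : (omegaC n ^ j) ^ n = 1 := by
  rcases eq_or_ne n 0 with rfl | hn
  · exact pow_zero _
  rw [← pow_mul, mul_comm, pow_mul, (isPrimitiveRoot_omegaC hn).pow_eq_one, one_pow]

theorem circ_adj_add_iff [NeZero n] (hS : ∀ s ∈ S, 0 < s ∧ s < n) (i d : Fin n) :
    (circ n S).Adj i (i + d) ↔ (d : ℕ) ∈ S ∨ n - d ∈ S := by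
  have hcast : (((i + d : Fin n) : ℕ) : ZMod n) = (i : ℕ) + ((d : ℕ) : ZMod n) := by
    rw [Fin.val_add, ZMod.natCast_mod, Nat.cast_add]
  have hd : (d : ℕ) < n := d.isLt
  simp only [circ, hcast, sub_add_cancel_left, add_sub_cancel_left, ne_eq, left_eq_add]
  constructor
  · rintro ⟨-, s, hs, h | h⟩
    · have := hS s hs
      rw [neg_eq_iff_add_eq_zero, ← Nat.cast_add, ZMod.natCast_eq_zero_iff] at h
      obtain ⟨k, hk⟩ := h
      -- `0 < d + s < 2 * n`, so the multiple is `n` itself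
      have hk1 : k = 1 := by rcases k with _ | _ | k <;> [omega; rfl; nlinarith]
      exact Or.inr (by rwa [show n - d = s by subst hk1; omega])
    · have := hS s hs
      rw [ZMod.natCast_eq_natCast_iff', Nat.mod_eq_of_lt hd, Nat.mod_eq_of_lt this.2] at h
      exact Or.inl (h ▸ hs)
  · rintro (h | h)
    · have := hS _ h
      exact ⟨fun h0 => by simp [h0] at this, d, h, Or.inr rfl⟩
    · have := hS _ h
      refine ⟨fun h0 => by simp [h0] at this, n - d, h, Or.inl ?_⟩
      rw [Nat.cast_sub hd.le, ZMod.natCast_self, zero_sub]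

theorem adjMat_circ_mulVec_pow (hS : ∀ s ∈ S, 0 < s ∧ s < n) {z : ℂ} (hz : z ^ n = 1) :
    (adjMat (circ n S)).map (algebraMap ℚ ℂ) *ᵥ (fun i : Fin n => z ^ (i : ℕ)) =
      Pval n S z • fun i : Fin n => z ^ (i : ℕ) := by
  rcases Nat.eq_zero_or_pos n with rfl | hn
  · ext i
    exact i.elim0
  have : NeZero n := ⟨hn.ne'⟩
  have hP : ∑ d : Fin n, (if (d : ℕ) ∈ S ∨ n - d ∈ S then (1 : ℂ) else 0) * z ^ (d : ℕ) =
      Pval n S z := by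
    rw [Fin.sum_univ_eq_sum_range (fun k => (if k ∈ S ∨ n - k ∈ S then (1 : ℂ) else 0) * z ^ k),
      range_eq_Ico, sum_eq_sum_Ico_succ_bot hn, Pval]
    have h0S : 0 ∉ S := fun h => (hS 0 h).1.ne rfl
    have hnS : n ∉ S := fun h => (hS n h).2.ne rfl
    simp [h0S, hnS]
  ext i
  simp only [mulVec, dotProduct, map_apply, adjMat, of_apply, Pi.smul_apply, smul_eq_mul,
    apply_ite (algebraMap ℚ ℂ), map_one, map_zero]
  rw [← Equiv.sum_comp (Equiv.addLeft i)]
  simp only [Equiv.coe_addLeft, circ_adj_add_iff hS, Fin.val_add, ← pow_eq_pow_mod _ hz, pow_add,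
    ← hP, sum_mul]
  refine sum_congr rfl fun d _ => ?_
  ring

theorem adjMat_circ_mul_fourier (hS : ∀ s ∈ S, 0 < s ∧ s < n) :
    (adjMat (circ n S)).map (algebraMap ℚ ℂ) * (vandermonde fun j : Fin n => omegaC n ^ (j : ℕ))ᵀ =
      (vandermonde fun j : Fin n => omegaC n ^ (j : ℕ))ᵀ *
        diagonal fun j : Fin n => Pval n S (omegaC n ^ (j : ℕ)) := by
  ext i j
  rw [mul_diagonal, mul_comm _ (Pval _ _ _)]
  exact congrFun (adjMat_circ_mulVec_pow hS (omegaC_pow_pow_self j)) i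

theorem exists_eq_smul_of_adjMat_circ_mulVec_eq_zero (hn : n ≠ 0) (hS : ∀ s ∈ S, 0 < s ∧ s < n)
    {j₀ : Fin n} (hP : ∀ j : Fin n, j ≠ j₀ → Pval n S (omegaC n ^ (j : ℕ)) ≠ 0) {w : Fin n → ℂ}
    (hw : (adjMat (circ n S)).map (algebraMap ℚ ℂ) *ᵥ w = 0) :
    ∃ c : ℂ, w = c • fun i : Fin n => (omegaC n ^ (j₀ : ℕ)) ^ (i : ℕ) := by
  have hdet : IsUnit (vandermonde fun j : Fin n => omegaC n ^ (j : ℕ))ᵀ.det := by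
    rw [det_transpose, isUnit_iff_ne_zero, det_vandermonde_ne_zero_iff]
    exact fun a b h => Fin.ext ((isPrimitiveRoot_omegaC hn).pow_inj a.isLt b.isLt h)
  exact exists_eq_smul_col_of_mul_eq_mul_diagonal hdet (adjMat_circ_mul_fourier hS) hP hw

theorem Pval_omegaC_pow_ne_zero (hS : ∀ s ∈ S, 0 < s ∧ 2 * s < n)
    (hne : S.Nonempty) (he : Even n)
    (h : ∀ j, 1 ≤ j → j ≤ n / 2 - 1 → Pval n S (omegaC n ^ j) ≠ 0) {j : ℕ} (hjn : j < n)
    (hj : j ≠ n / 2) : Pval n S (omegaC n ^ j) ≠ 0 := by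
  have hω := isPrimitiveRoot_omegaC (n := n) (by omega)
  rcases Nat.lt_or_gt_of_ne hj with hlt | hgt
  · rcases Nat.eq_zero_or_pos j with rfl | hpos
    · simpa using Pval_one_ne_zero hS hne
    · exact h j hpos (by omega)
  · have hinv : omegaC n ^ j = (omegaC n ^ (n - j))⁻¹ := by
      refine eq_inv_of_mul_eq_one_left ?_
      rw [← pow_add, Nat.add_sub_cancel' hjn.le, hω.pow_eq_one]
    rw [hinv, Pval_inv (omegaC_pow_pow_self _) (by omega), _root_.map_ne_zero]
    have := Nat.even_iff.1 he
    exact h (n - j) (by omega) (by omega)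

theorem adjMat_circ_mulVec_neg_one_pow (hS : ∀ s ∈ S, 0 < s ∧ 2 * s < n) (he : Even n)
    (hcard : #(S.filter Odd) = #(S.filter Even)) :
    adjMat (circ n S) *ᵥ (fun i : Fin n => (-1 : ℚ) ^ (i : ℕ)) = 0 := by
  have hcast : algebraMap ℚ ℂ ∘ (fun i : Fin n => (-1 : ℚ) ^ (i : ℕ)) =
      fun i : Fin n => (-1 : ℂ) ^ (i : ℕ) := by
    ext
    simp
  rw [← map_mulVec_comp_eq_zero_iff (algebraMap ℚ ℂ).injective, hcast,
    adjMat_circ_mulVec_pow (fun s hs => by have := hS s hs; omega) he.neg_one_pow,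
    Pval_neg_one hS he hcard, zero_smul]

theorem omegaC_pow_eq_neg_one_of_isNutGraph (hS : ∀ s ∈ S, 0 < s ∧ s < n)
    (hnut : IsNutGraph (circ n S))
    (hu : adjMat (circ n S) *ᵥ (fun i : Fin n => (-1 : ℚ) ^ (i : ℕ)) = 0) {j : ℕ}
    (hPj : Pval n S (omegaC n ^ j) = 0) : omegaC n ^ j = -1 := by
  obtain ⟨hn, v, hv0, -, hv⟩ := hnut
  have hx := mul_eq_mul_of_map_mulVec_eq_zero hv (w := fun i : Fin n => (omegaC n ^ j) ^ (i : ℕ))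
    (by rw [adjMat_circ_mulVec_pow hS (omegaC_pow_pow_self j), hPj, zero_smul])
    ⟨0, by omega⟩ ⟨1, by omega⟩
  have hu' := mul_eq_mul_of_map_mulVec_eq_zero hv
    ((map_mulVec_comp_eq_zero_iff (algebraMap ℚ ℂ).injective _ _).2 hu) ⟨0, by omega⟩ ⟨1, by omega⟩
  simp only [pow_zero, eq_ratCast, one_mul, pow_one, Function.comp_apply, Rat.cast_one,
    Rat.cast_neg, neg_mul] at hx hu'
  refine mul_right_cancel₀ (Rat.cast_ne_zero.2 (hv0 ⟨0, by omega⟩)) ?_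
  rw [← hx, hu', neg_one_mul]

theorem isNutGraph_circ_of_Pval_ne_zero (hn : 2 ≤ n) (he : Even n) (hS : ∀ s ∈ S, 0 < s ∧ s < n)
    (hu : adjMat (circ n S) *ᵥ (fun i : Fin n => (-1 : ℚ) ^ (i : ℕ)) = 0)
    (hP : ∀ j < n, j ≠ n / 2 → Pval n S (omegaC n ^ j) ≠ 0) : IsNutGraph (circ n S) := by
  refine ⟨hn, _, fun i => by simp, hu, fun w hw => ?_⟩
  obtain ⟨c, hc⟩ := exists_eq_smul_of_adjMat_circ_mulVec_eq_zero (j₀ := ⟨n / 2, by omega⟩)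
    (by omega) hS (fun j hj => hP j j.isLt fun h => hj (Fin.ext h))
    ((map_mulVec_comp_eq_zero_iff (algebraMap ℚ ℂ).injective _ _).2 hw)
  refine ⟨w ⟨0, by omega⟩, funext fun i => ?_⟩
  have hi := congrFun hc i
  have h0 := congrFun hc ⟨0, by omega⟩
  simp only [Function.comp_apply, eq_ratCast, omegaC_pow_half (by omega : n ≠ 0) he, Pi.smul_apply,
    smul_eq_mul, pow_zero, mul_one] at hi h0
  have : (w i : ℂ) = ((w ⟨0, by omega⟩ * (-1) ^ (i : ℕ) : ℚ) : ℂ) := by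
    rw [hi, ← h0]
    simp
  exact_mod_cast this

end

/-- If `n ≥ 4` is even and `S ⊆ {1,…,n/2−1}` has equally many odd
and even elements (`t ≥ 1` of each), then `Circ(n,S)` is a nut graph if and only if
`P(ω^j) ≠ 0` for every `j ∈ {1,…,n/2−1}`. -/
theorem circulant_nut_iff_no_other_zero_eigenvalue
    (n : ℕ) (hn : 4 ≤ n) (hneven : Even n) (S : Finset ℕ)
    (hSsub : S ⊆ Finset.Icc 1 (n / 2 - 1)) (t : ℕ) (ht : 1 ≤ t)
    (hodd : (S.filter fun s => Odd s).card = t)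
    (heven : (S.filter fun s => Even s).card = t) :
    IsNutGraph (circ n S) ↔
      ∀ j, 1 ≤ j → j ≤ n / 2 - 1 → Pval n S (omegaC n ^ j) ≠ 0 := by
  have hS2 : ∀ s ∈ S, 0 < s ∧ 2 * s < n := fun s hs => by have := mem_Icc.1 (hSsub hs); omega
  have hSn : ∀ s ∈ S, 0 < s ∧ s < n := fun s hs => by have := hS2 s hs; omega
  have hne : S.Nonempty :=
    (card_pos.1 (by omega : 0 < #(S.filter fun s => Odd s))).mono (filter_subset _ _)
  have hu := adjMat_circ_mulVec_neg_one_pow hS2 hneven (hodd.trans heven.symm)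
  constructor
  · intro hnut j hj1 hj2 hPj
    have hωj : omegaC n ^ j = omegaC n ^ (n / 2) := by
      rw [omegaC_pow_half (by omega) hneven]
      exact omegaC_pow_eq_neg_one_of_isNutGraph hSn hnut hu hPj
    have := (isPrimitiveRoot_omegaC (by omega)).pow_inj (by omega) (by omega) hωj
    omega
  · exact fun h => isNutGraph_circ_of_Pval_ne_zero (by omega) hneven hSn hu
      fun j hjn hj => Pval_omegaC_pow_ne_zero hS2 hne hneven h hjn hj
end

section
/- Let n, x, t be positive integers such that n is even and n ≥ 2x + 4t, and let G = Circ(n, {x, x+1, …, x+2t−1}). Then G is a nut graph if and only if gcd(n/2, t) = 1 and gcd(n/2, 2x + 2t − 1) = 1. -/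
/-!
Write `n = 2m` and work on `ZMod n` with the operator
`(A W)(z) = ∑_{s ∈ S} (W (z + s) + W (z - s))`, which is the adjacency matrix in these coordinates.
The discrete Fourier transform diagonalises `A`: the frequency `k` has eigenvalue
`∑_{s ∈ S} (ζ^s + ζ^{-s})` with `ζ = e(k/n)`, and multiplying it by `ζ^{x+2t-1}` factors it as
`(ζ^{2x+2t-1} + 1)(1 + ζ + ⋯ + ζ^{2t-1})`. When `gcd(m, t) = 1` and `gcd(m, 2x+2t-1) = 1` this
vanishes only at `k = m`, so the kernel is the line of the alternating vector, which has no zero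
entries.

Conversely, let `q ≥ 2` divide `gcd(m, t)` or `gcd(m, 2x+2t-1)`. The vector `δ₀ - δ_q` on
`ZMod (2q)`, pulled back to `ZMod n`, has zero entries and lies in the kernel: in the first case because
`2q ∣ 2t` and it sums to zero over a period, in the second because it is antiperiodic with period
`q ≡ 2x+2t-1 (mod 2q)` while `S` is symmetric about `(2x+2t-1)/2`. The alternating vector is the
case `q = 1` of the same construction.
-/

open Finset Polynomial

open Function

lemma ZMod.finEquiv_apply {n : ℕ} [NeZero n] (i : Fin n) : ZMod.finEquiv n i = (i : ℕ) := by
  obtain ⟨k, rfl⟩ := Nat.exists_eq_succ_of_ne_zero (NeZero.ne n)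
  exact (Fin.cast_val_eq_self i).symm

lemma ZMod.natCast_eq_zero_iff_of_lt {n a : ℕ} (ha : a < n) : (a : ZMod n) = 0 ↔ a = 0 := by
  rw [ZMod.natCast_eq_zero_iff]
  exact ⟨fun h => Nat.eq_zero_of_dvd_of_lt h ha, fun h => h ▸ dvd_zero n⟩

lemma ZMod.sum_Ico_natCast {p : ℕ} [NeZero p] {M : Type*} [AddCommMonoid M] (f : ZMod p → M)
    (a : ℕ) : ∑ s ∈ Ico a (a + p), f s = ∑ y, f y := by
  rw [sum_Ico_eq_sum_range, add_tsub_cancel_left, sum_range]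
  simp only [Nat.cast_add]
  rw [← Equiv.sum_comp (Equiv.addLeft (a : ZMod p)), ← Equiv.sum_comp (ZMod.finEquiv p).toEquiv]
  simp [ZMod.finEquiv_apply]

lemma ZMod.sum_Ico_natCast_mul {p : ℕ} [NeZero p] {M : Type*} [AddCommMonoid M]
    (f : ZMod p → M) (a k : ℕ) : ∑ s ∈ Ico a (a + p * k), f s = k • ∑ y, f y := by
  induction k with
  | zero => simp
  | succ k ih =>
    rw [mul_add_one, ← add_assoc, ← sum_Ico_consecutive _ (Nat.le_add_right a _)
      (Nat.le_add_right _ p), ih, ZMod.sum_Ico_natCast, succ_nsmul]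

lemma ZMod.natCast_eq_of_dvd_of_odd {q r : ℕ} (hq : q ∣ r) (hr : Odd r) :
    (r : ZMod (2 * q)) = q := by
  obtain ⟨c, rfl⟩ := hq
  obtain ⟨j, rfl⟩ := (Nat.odd_mul.mp hr).2
  have h2q : ((2 * q : ℕ) : ZMod (2 * q)) = 0 := ZMod.natCast_self _
  push_cast at h2q ⊢
  linear_combination j * h2q

lemma ZMod.eq_zero_or_eq_of_two_mul_mul_eq_zero {m a : ℕ} [NeZero m] (h : m.Coprime a)
    {k : ZMod (2 * m)} (hk : (2 * a : ZMod (2 * m)) * k = 0) : k = 0 ∨ k = m := by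
  have hdvd : 2 * m ∣ 2 * (a * k.val) := by
    rw [← ZMod.natCast_eq_zero_iff]
    push_cast
    rwa [ZMod.natCast_zmod_val, ← mul_assoc]
  rw [Nat.mul_dvd_mul_iff_left two_pos] at hdvd
  obtain ⟨c, hc⟩ := h.dvd_of_dvd_mul_left hdvd
  have hlt := k.val_lt
  have hc2 : c < 2 := by nlinarith
  interval_cases c
  · left; rw [← ZMod.val_eq_zero]; simpa using hc
  · right; rw [← ZMod.natCast_zmod_val k, hc, mul_one]

section CircOp

variable {N : ℕ} {R : Type*}

def circOp [AddCommMonoid R] (S : Finset ℕ) (Φ : ZMod N → R) (z : ZMod N) : R :=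
  ∑ s ∈ S, (Φ (z + s) + Φ (z - s))

lemma circOp_comp_castHom [AddCommMonoid R] {p : ℕ} (h : p ∣ N) (S : Finset ℕ)
    (g : ZMod p → R) :
    circOp S (g ∘ ZMod.castHom h (ZMod p)) = circOp S g ∘ ZMod.castHom h (ZMod p) := by
  ext z
  simp [circOp, map_add, map_sub, map_natCast]

lemma AddMonoidHom.comp_circOp {R' : Type*} [AddCommMonoid R] [AddCommMonoid R']
    (f : R →+ R') (S : Finset ℕ) (Φ : ZMod N → R) :
    f ∘ circOp S Φ = circOp S (f ∘ Φ) := by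
  ext z
  simp [circOp]

lemma circOp_Ico_eq_zero_of_sum_eq_zero [AddCommMonoid R] [NeZero N] {L : ℕ} (hL : N ∣ L)
    (x : ℕ) {g : ZMod N → R} (hg : ∑ y, g y = 0) : circOp (Ico x (x + L)) g = 0 := by
  obtain ⟨k, rfl⟩ := hL
  ext z
  simp only [circOp, sum_add_distrib, Pi.zero_apply]
  have hshift : ∑ y, g (z + y) = 0 := (Equiv.sum_comp (Equiv.addLeft z) g).trans hg
  have hreflect : ∑ y, g (z - y) = 0 := (Equiv.sum_comp (Equiv.subLeft z) g).trans hg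
  rw [ZMod.sum_Ico_natCast_mul (fun y => g (z + y)), ZMod.sum_Ico_natCast_mul (fun y => g (z - y)),
    hshift, hreflect, smul_zero, add_zero]

lemma circOp_Ico_eq_zero_of_antiperiodic [AddCommGroup R] (x t : ℕ) {g : ZMod N → R}
    (hg : Antiperiodic g ((2 * x + 2 * t - 1 : ℕ) : ZMod N)) :
    circOp (Ico x (x + 2 * t)) g = 0 := by
  ext z
  have hreflect :
      ∑ s ∈ Ico x (x + 2 * t), g (z - s) = - ∑ s ∈ Ico x (x + 2 * t), g (z + s) := by
    set r := 2 * x + 2 * t - 1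
    obtain rfl | ht := t.eq_zero_or_pos
    · simp
    calc ∑ s ∈ Ico x (x + 2 * t), g (z - s)
        = ∑ s ∈ Ico x (x + 2 * t), g (z - r + (r - s : ℕ)) := by
          refine sum_congr rfl fun s hs => ?_
          rw [Nat.cast_sub (show s ≤ r by grind), sub_add_sub_cancel]
      _ = ∑ s ∈ Ico x (x + 2 * t), g (z + s - r) := by
          rw [sum_Ico_reflect (fun j => g (z - r + j)) x (by omega),
            show r + 1 - (x + 2 * t) = x by omega, show r + 1 - x = x + 2 * t by omega]
          simp only [sub_add_eq_add_sub]
      _ = - ∑ s ∈ Ico x (x + 2 * t), g (z + s) := by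
          simp only [hg.sub_eq, sum_neg_distrib]
  simp only [circOp, sum_add_distrib, hreflect, add_neg_cancel, Pi.zero_apply]

end CircOp

def dipole (q : ℕ) : ZMod (2 * q) → ℚ := Pi.single 0 1 - Pi.single (q : ZMod (2 * q)) 1

lemma dipole_antiperiodic (q : ℕ) : Antiperiodic (dipole q) q := by
  intro y
  have h2q : (q : ZMod (2 * q)) + q = 0 := by
    rw [← two_mul]; exact_mod_cast ZMod.natCast_self (2 * q)
  have hq : y + q = 0 ↔ y = q :=
    ⟨fun h => by linear_combination h - h2q, fun h => by linear_combination h + h2q⟩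
  simp only [dipole, Pi.sub_apply, Pi.single_apply, hq, add_eq_right]
  split_ifs <;> simp

lemma sum_dipole (q : ℕ) [NeZero q] : ∑ y, dipole q y = 0 := by
  simp [dipole, sum_sub_distrib]

lemma dipole_apply_zero {q : ℕ} (hq : q ≠ 0) : dipole q 0 = 1 := by
  have : (0 : ZMod (2 * q)) ≠ q := by
    rw [ne_comm, Ne, ZMod.natCast_eq_zero_iff]
    exact fun h => hq (Nat.eq_zero_of_dvd_of_lt h (by omega))
  simp [dipole, this]

lemma dipole_apply_one {q : ℕ} (hq : 2 ≤ q) : dipole q 1 = 0 := by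
  have hq1 : (1 : ZMod (2 * q)) ≠ q := by
    rw [← Nat.cast_one, Ne, ZMod.natCast_eq_natCast_iff', Nat.mod_eq_of_lt (by omega),
      Nat.mod_eq_of_lt (by omega)]
    omega
  have h10 : (1 : ZMod (2 * q)) ≠ 0 := by
    rw [← Nat.cast_one, Ne, ZMod.natCast_eq_zero_iff]
    exact fun h => by have := Nat.le_of_dvd one_pos h; omega
  simp [dipole, hq1, h10]

lemma dipole_one_apply_ne_zero (y : ZMod (2 * 1)) : dipole 1 y ≠ 0 := by
  obtain rfl | hy := eq_or_ne y 0
  · simp [dipole_apply_zero]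
  have : y = 1 := by
    rw [Ne, ← ZMod.val_eq_zero] at hy
    rw [← ZMod.natCast_zmod_val y, show y.val = 1 by have := y.val_lt; omega, Nat.cast_one]
  have := dipole_antiperiodic 1 0
  simp_all [dipole_apply_zero]

lemma sum_Ico_pow_add_inv_pow_ne_zero {K : Type*} [Field K] [CharZero K] {ζ : K} {x t : ℕ}
    (hζ : ζ ≠ 0) (ht : 0 < t) (h2t : ζ ^ (2 * t) = 1 → ζ = 1)
    (hr : ζ ^ (2 * x + 2 * t - 1) ≠ -1) :
    ∑ s ∈ Ico x (x + 2 * t), (ζ ^ s + (ζ ^ s)⁻¹) ≠ 0 := by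
  set G := ∑ u ∈ range (2 * t), ζ ^ u
  have hG : G ≠ 0 := by
    by_cases h1 : ζ = 1
    · simp [G, h1]; omega
    · intro h
      have : G * (ζ - 1) = ζ ^ (2 * t) - 1 := geom_sum_mul ζ (2 * t)
      rw [h, zero_mul] at this
      exact h1 (h2t (by linear_combination -this))
  have key : (∑ s ∈ Ico x (x + 2 * t), (ζ ^ s + (ζ ^ s)⁻¹)) * ζ ^ (x + 2 * t - 1)
      = (ζ ^ (2 * x + 2 * t - 1) + 1) * G := by
    have hterm : ∀ u < 2 * t, (ζ ^ (x + u) + (ζ ^ (x + u))⁻¹) * ζ ^ (x + 2 * t - 1)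
        = ζ ^ (2 * x + 2 * t - 1) * ζ ^ u + ζ ^ (2 * t - 1 - u) := by
      intro u hu
      have e1 : ζ ^ (x + u) * ζ ^ (x + 2 * t - 1) = ζ ^ (2 * x + 2 * t - 1) * ζ ^ u := by
        rw [← pow_add, ← pow_add]; congr 1; omega
      have e2 : (ζ ^ (x + u))⁻¹ * ζ ^ (x + 2 * t - 1) = ζ ^ (2 * t - 1 - u) := by
        rw [inv_mul_eq_iff_eq_mul₀ (pow_ne_zero _ hζ), ← pow_add]; congr 1; omega
      rw [add_mul, e1, e2]
    rw [sum_mul, sum_Ico_eq_sum_range, add_tsub_cancel_left,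
      sum_congr rfl fun u hu => hterm u (mem_range.mp hu), sum_add_distrib, ← mul_sum,
      sum_range_reflect (ζ ^ ·) (2 * t)]
    ring
  intro h0
  rw [h0, zero_mul] at key
  rcases mul_eq_zero.mp key.symm with h | h
  · exact hr (by linear_combination h)
  · exact hG h

section Fourier

open scoped ZMod

variable {N : ℕ} [NeZero N]

lemma ZMod.dft_comp_add {E : Type*} [AddCommGroup E] [Module ℂ E] (Φ : ZMod N → E)
    (a k : ZMod N) : 𝓕 (fun j => Φ (j + a)) k = ZMod.stdAddChar (a * k) • 𝓕 Φ k := by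
  simp only [ZMod.dft_apply, smul_sum, smul_smul]
  rw [← Equiv.sum_comp (Equiv.subRight a)]
  refine sum_congr rfl fun j _ => ?_
  simp only [Equiv.subRight_apply, sub_add_cancel, ← AddChar.map_add_eq_mul]
  congr 2
  ring

lemma dft_circOp (S : Finset ℕ) (Φ : ZMod N → ℂ) (k : ZMod N) :
    𝓕 (circOp S Φ) k =
      (∑ s ∈ S, (ZMod.stdAddChar k ^ s + (ZMod.stdAddChar k ^ s)⁻¹)) * 𝓕 Φ k := by
  have : circOp S Φ = ∑ s ∈ S, ((fun j => Φ (j + s)) + fun j => Φ (j + -(s : ZMod N))) := by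
    ext z
    simp [circOp, sub_eq_add_neg]
  rw [this, map_sum, Finset.sum_apply, sum_mul]
  refine sum_congr rfl fun s _ => ?_
  rw [map_add, Pi.add_apply, ZMod.dft_comp_add, ZMod.dft_comp_add, smul_eq_mul, smul_eq_mul,
    neg_mul, AddChar.map_neg_eq_inv, ← nsmul_eq_mul, AddChar.map_nsmul_eq_pow]
  ring

lemma ZMod.exists_eq_smul_of_dft_eq_zero {Φ V : ZMod N → ℂ} (k₀ : ZMod N)
    (hΦ : ∀ k ≠ k₀, 𝓕 Φ k = 0) (hV : ∀ k ≠ k₀, 𝓕 V k = 0) (hV0 : V ≠ 0) :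
    ∃ c : ℂ, Φ = c • V := by
  have hVk₀ : 𝓕 V k₀ ≠ 0 := by
    refine fun h => hV0 (ZMod.dft.injective ?_)
    ext k
    by_cases hk : k = k₀
    · simp [hk, h]
    · simp [hV k hk]
  refine ⟨𝓕 Φ k₀ / 𝓕 V k₀, ZMod.dft.injective ?_⟩
  ext k
  rw [LinearEquiv.map_smul, Pi.smul_apply, smul_eq_mul]
  by_cases hk : k = k₀
  · subst hk; field_simp
  · simp [hΦ k hk, hV k hk]

end Fourier

section Spectrum

open scoped ZMod

variable {m x t : ℕ} [NeZero m]

lemma sum_Ico_stdAddChar_ne_zero (ht : 0 < t) (hmt : m.Coprime t)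
    (hmr : m.Coprime (2 * x + 2 * t - 1)) {k : ZMod (2 * m)} (hk : k ≠ m) :
    ∑ s ∈ Ico x (x + 2 * t), (ZMod.stdAddChar k ^ s + (ZMod.stdAddChar k ^ s)⁻¹) ≠ 0 := by
  have hpow : ∀ a : ℕ, m.Coprime a → ZMod.stdAddChar k ^ (2 * a) = 1 → k = 0 := by
    intro a ha h
    rw [← AddChar.map_nsmul_eq_pow, nsmul_eq_mul,
      ← AddChar.map_zero_eq_one (ZMod.stdAddChar (N := 2 * m))] at h
    have h := ZMod.injective_stdAddChar h
    push_cast at h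
    exact (ZMod.eq_zero_or_eq_of_two_mul_mul_eq_zero ha h).resolve_right hk
  refine sum_Ico_pow_add_inv_pow_ne_zero (by simp [ZMod.stdAddChar_apply]) ht
    (fun h => by simp [hpow t hmt h]) fun h => ?_
  have hk0 := hpow _ hmr (by rw [pow_mul', h]; norm_num)
  norm_num [hk0] at h

lemma exists_eq_smul_of_circOp_eq_zero (ht : 0 < t) (hmt : m.Coprime t)
    (hmr : m.Coprime (2 * x + 2 * t - 1)) {V W : ZMod (2 * m) → ℚ}
    (hV : circOp (Ico x (x + 2 * t)) V = 0) (hV0 : V 0 ≠ 0)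
    (hW : circOp (Ico x (x + 2 * t)) W = 0) : ∃ c : ℚ, W = c • V := by
  let ι : ℚ →+ ℂ := (Rat.castHom ℂ).toAddMonoidHom
  have hsupp : ∀ Φ : ZMod (2 * m) → ℚ, circOp (Ico x (x + 2 * t)) Φ = 0 →
      ∀ k ≠ (m : ZMod (2 * m)), 𝓕 (ι ∘ Φ) k = 0 := by
    intro Φ hΦ k hk
    have h := dft_circOp (Ico x (x + 2 * t)) (ι ∘ Φ) k
    rw [← ι.comp_circOp, hΦ, show ι ∘ (0 : ZMod (2 * m) → ℚ) = 0 by ext; simp, map_zero,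
      Pi.zero_apply, eq_comm, mul_eq_zero] at h
    exact h.resolve_left (sum_Ico_stdAddChar_ne_zero ht hmt hmr hk)
  obtain ⟨c, hc⟩ := ZMod.exists_eq_smul_of_dft_eq_zero _ (hsupp W hW) (hsupp V hV)
    fun h => hV0 (by simpa [ι] using congrFun h 0)
  refine ⟨W 0 / V 0, funext fun z => Rat.cast_injective (α := ℂ) ?_⟩
  have hz := congrFun hc z
  have h0 := congrFun hc 0
  simp only [ι, comp_apply, Pi.smul_apply, smul_eq_mul] at hz h0
  simp only [RingHom.toAddMonoidHom_eq_coe, AddMonoidHom.coe_coe, Rat.coe_castHom] at hz h0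
  have hV0' : (V 0 : ℂ) ≠ 0 := by exact_mod_cast hV0
  rw [Pi.smul_apply, smul_eq_mul, Rat.cast_mul, Rat.cast_div, hz, h0]
  field_simp

end Spectrum

section Graph

variable {n : ℕ} [NeZero n] {S : Finset ℕ}

lemma circ_adj_iff (hS : ∀ s ∈ S, 0 < s ∧ 2 * s < n) (i j : Fin n) :
    (circ n S).Adj i j ↔ ∃ s ∈ S, ZMod.finEquiv n j = ZMod.finEquiv n i + s ∨
      ZMod.finEquiv n j = ZMod.finEquiv n i - s := by
  simp only [circ, ZMod.finEquiv_apply]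
  constructor
  · rintro ⟨-, s, hs, h | h⟩
    · exact ⟨s, hs, Or.inr (by linear_combination -h)⟩
    · exact ⟨s, hs, Or.inl (by linear_combination h)⟩
  · rintro ⟨s, hs, h⟩
    have hs0 : (s : ZMod n) ≠ 0 := by
      rw [Ne, ZMod.natCast_eq_zero_iff_of_lt (by grind)]; grind
    refine ⟨?_, s, hs, ?_⟩
    · rintro rfl
      rcases h with h | h
      · exact hs0 (by linear_combination -h)
      · exact hs0 (by linear_combination h)
    · rcases h with h | h
      · exact Or.inr (by linear_combination h)
      · exact Or.inl (by linear_combination -h)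

lemma adjMat_circ_mulVec (hS : ∀ s ∈ S, 0 < s ∧ 2 * s < n) (w : Fin n → ℚ) (i : Fin n) :
    (adjMat (circ n S)).mulVec w i =
      circOp S (w ∘ (ZMod.finEquiv n).symm) (ZMod.finEquiv n i) := by
  classical
  set I := ZMod.finEquiv n i
  have hlt : ∀ s ∈ S, s < n := fun s hs => by grind
  have hinj : Set.InjOn (fun s : ℕ => (s : ZMod n)) S := fun s hs s' hs' h => by
    simpa [ZMod.val_natCast_of_lt (hlt s hs), ZMod.val_natCast_of_lt (hlt s' hs')] using
      congrArg ZMod.val h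
  have hdisj : Disjoint (S.image (fun s : ℕ => I + s)) (S.image (fun s : ℕ => I - s)) := by
    simp only [disjoint_left, mem_image, not_exists, not_and]
    rintro _ ⟨s, hs, rfl⟩ s' hs' h
    have : ((s + s' : ℕ) : ZMod n) = 0 := by push_cast; linear_combination -h
    rw [ZMod.natCast_eq_zero_iff_of_lt (by grind)] at this
    grind
  calc (adjMat (circ n S)).mulVec w i
      = ∑ z, if (circ n S).Adj i ((ZMod.finEquiv n).symm z) then
          w ((ZMod.finEquiv n).symm z) else 0 := by
        simp only [adjMat, Matrix.mulVec, dotProduct, Matrix.of_apply, ite_mul, one_mul, zero_mul]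
        exact (Equiv.sum_comp (ZMod.finEquiv n).symm.toEquiv
          (fun j => if (circ n S).Adj i j then w j else 0)).symm
    _ = ∑ z ∈ S.image (fun s : ℕ => I + s) ∪ S.image (fun s : ℕ => I - s),
          w ((ZMod.finEquiv n).symm z) := by
        rw [← sum_filter]
        congr 1
        ext z
        simp only [mem_filter, mem_univ, true_and, circ_adj_iff hS, RingEquiv.apply_symm_apply,
          mem_union, mem_image, and_or_left, exists_or, @eq_comm _ z, I]
    _ = circOp S (w ∘ (ZMod.finEquiv n).symm) I := by
        rw [sum_union hdisj, sum_image (fun s hs s' hs' h => hinj hs hs' (add_left_cancel h)),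
          sum_image (fun s hs s' hs' h => hinj hs hs' (sub_right_injective h)), circOp,
          sum_add_distrib]
        rfl

lemma adjMat_circ_mulVec_eq_zero_iff (hS : ∀ s ∈ S, 0 < s ∧ 2 * s < n) (w : Fin n → ℚ) :
    (adjMat (circ n S)).mulVec w = 0 ↔ circOp S (w ∘ (ZMod.finEquiv n).symm) = 0 := by
  simp only [funext_iff, adjMat_circ_mulVec hS, Pi.zero_apply]
  exact (ZMod.finEquiv n).surjective.forall (p := fun z => circOp S _ z = 0) |>.symm

lemma isNutGraph_circ_iff (hS : ∀ s ∈ S, 0 < s ∧ 2 * s < n) :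
    IsNutGraph (circ n S) ↔
      2 ≤ n ∧ ∃ V : ZMod n → ℚ, (∀ z, V z ≠ 0) ∧ circOp S V = 0 ∧
        ∀ W : ZMod n → ℚ, circOp S W = 0 → ∃ c : ℚ, W = c • V := by
  have hcomp : ∀ W : ZMod n → ℚ, (W ∘ ZMod.finEquiv n) ∘ (ZMod.finEquiv n).symm = W :=
    fun W => by ext; simp
  refine and_congr_right fun _ => ⟨?_, ?_⟩
  · rintro ⟨v, hv, hker, huniq⟩
    refine ⟨v ∘ (ZMod.finEquiv n).symm, fun z => hv _,
      (adjMat_circ_mulVec_eq_zero_iff hS v).1 hker, fun W hW => ?_⟩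
    obtain ⟨c, hc⟩ := huniq (W ∘ ZMod.finEquiv n)
      ((adjMat_circ_mulVec_eq_zero_iff hS _).2 (by rwa [hcomp]))
    exact ⟨c, by rw [← hcomp W, hc]; rfl⟩
  · rintro ⟨V, hV, hker, huniq⟩
    refine ⟨V ∘ ZMod.finEquiv n, fun i => hV _,
      (adjMat_circ_mulVec_eq_zero_iff hS _).2 (by rwa [hcomp]), fun w hw => ?_⟩
    obtain ⟨c, hc⟩ := huniq _ ((adjMat_circ_mulVec_eq_zero_iff hS w).1 hw)
    exact ⟨c, by ext i; simpa using congrFun hc (ZMod.finEquiv n i)⟩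

end Graph

lemma circOp_dipole_eq_zero_of_dvd {q x t : ℕ} (ht : 0 < t) (hq : q ∣ 2 * x + 2 * t - 1) :
    circOp (Ico x (x + 2 * t)) (dipole q) = 0 := by
  apply circOp_Ico_eq_zero_of_antiperiodic
  rw [ZMod.natCast_eq_of_dvd_of_odd hq ⟨x + t - 1, by omega⟩]
  exact dipole_antiperiodic q

lemma exists_circOp_dipole_eq_zero {m x t : ℕ} (hm : 0 < m) (ht : 0 < t)
    (h : ¬ (m.gcd t = 1 ∧ m.gcd (2 * x + 2 * t - 1) = 1)) :
    ∃ q, 2 ≤ q ∧ q ∣ m ∧ circOp (Ico x (x + 2 * t)) (dipole q) = 0 := by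
  rcases not_and_or.mp h with h | h
  · have : NeZero (m.gcd t) := ⟨(Nat.gcd_pos_of_pos_left t hm).ne'⟩
    refine ⟨m.gcd t, ?_, m.gcd_dvd_left t, ?_⟩
    · have := Nat.gcd_pos_of_pos_left t hm; omega
    · exact circOp_Ico_eq_zero_of_sum_eq_zero (mul_dvd_mul_left 2 (m.gcd_dvd_right t)) x
        (sum_dipole _)
  · refine ⟨m.gcd _, ?_, m.gcd_dvd_left _, circOp_dipole_eq_zero_of_dvd ht (m.gcd_dvd_right _)⟩
    have := Nat.gcd_pos_of_pos_left (2 * x + 2 * t - 1) hm; omega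

theorem circulant_nut_consecutive_generators_general
    (n x t : ℕ) (hx : 0 < x) (ht : 0 < t)
    (hneven : Even n) (hbig : 2 * x + 4 * t ≤ n) :
    IsNutGraph (circ n (Finset.Ico x (x + 2 * t))) ↔
      Nat.gcd (n / 2) t = 1 ∧ Nat.gcd (n / 2) (2 * x + 2 * t - 1) = 1 := by
  obtain ⟨m, rfl⟩ := even_iff_two_dvd.mp hneven
  have hm : 0 < m := by omega
  have : NeZero m := ⟨hm.ne'⟩
  have hS : ∀ s ∈ Ico x (x + 2 * t), 0 < s ∧ 2 * s < 2 * m := fun s hs => by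
    rw [mem_Ico] at hs; omega
  rw [isNutGraph_circ_iff hS, Nat.mul_div_cancel_left m two_pos]
  let lift (q : ℕ) (hq : q ∣ m) : ZMod (2 * m) → ℚ :=
    dipole q ∘ ZMod.castHom (mul_dvd_mul_left 2 hq) (ZMod (2 * q))
  constructor
  · rintro ⟨-, V, hV, -, huniq⟩
    by_contra h
    obtain ⟨q, hq2, hqm, hq⟩ := exists_circOp_dipole_eq_zero hm ht h
    obtain ⟨c, hc⟩ := huniq (lift q hqm) (by rw [circOp_comp_castHom, hq]; rfl)
    have h0 := congrFun hc 0
    have h1 := congrFun hc 1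
    simp only [lift, comp_apply, map_zero, map_one, dipole_apply_zero (by omega : q ≠ 0),
      dipole_apply_one hq2, Pi.smul_apply, smul_eq_mul] at h0 h1
    exact hV 1 ((mul_eq_zero.mp h1.symm).resolve_left (left_ne_zero_of_mul_eq_one h0.symm))
  · rintro ⟨hmt, hmr⟩
    have hV : circOp (Ico x (x + 2 * t)) (lift 1 (one_dvd m)) = 0 := by
      rw [circOp_comp_castHom, circOp_dipole_eq_zero_of_dvd ht (one_dvd _)]; rfl
    exact ⟨by omega, lift 1 (one_dvd m), fun z => dipole_one_apply_ne_zero _, hV,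
      fun W hW => exists_eq_smul_of_circOp_eq_zero ht hmt hmr hV (dipole_one_apply_ne_zero _) hW⟩

/-- For positive integers `n, x, t` with `n` even and `n ≥ 2x + 4t`,
the circulant graph `Circ(n, {x, x+1, …, x+2t−1})` is a nut graph if and only if
`gcd(n/2, t) = 1` and `gcd(n/2, 2x + 2t − 1) = 1`. -/
theorem circulant_nut_consecutive_generators
    (n x t : ℕ) (hn : 0 < n) (hx : 0 < x) (ht : 0 < t)
    (hneven : Even n) (hbig : 2 * x + 4 * t ≤ n) :
    IsNutGraph (circ n (Finset.Ico x (x + 2 * t))) ↔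
      Nat.gcd (n / 2) t = 1 ∧ Nat.gcd (n / 2) (2 * x + 2 * t - 1) = 1 :=
  circulant_nut_consecutive_generators_general n x t hx ht hneven hbig
end

section
/- For every even integer n ≥ 8 there exists a set S ⊆ {1, …, n/2 − 1} such that the circulant graph Circ(n, S) is a 4-regular nut graph. -/
open Finset Polynomial

/-!
The graph is `Circ(n, {a, a + 1})` with `a = ⌊(n - 4) / 4⌋`, so that `2a + 1` is whichever of
`n/2 - 1`, `n/2 - 2` is odd and hence a unit mod `n`. Its adjacency operator sends `W : ℤ/nℤ → ℚ`
to `x ↦ W(x + a) + W(x - a) + W(x + a + 1) + W(x - a - 1)`, which kills the alternating sign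
`(-1)^x` because `n` is even. Conversely, if `W` is in the kernel then `u = W + W(· + 1)`
satisfies `u(x + 2a + 1) = -u(x)`; as `2a + 1` generates `ℤ/nℤ` this gives `u = u(0) (-1)^x`,
and pairing with `(-1)^x` (which sees `u` as a telescoping sum) forces `u(0) = 0`. Then
`W(x + 1) = -W(x)`, i.e. `W` is a multiple of `(-1)^x`. Every vertex has the four distinct
neighbours `x ± a`, `x ± (a + 1)`.
-/

namespace Circulant

def altSign {n : ℕ} (x : ZMod n) : ℚ := (-1) ^ x.val

theorem altSign_zero {n : ℕ} : altSign (0 : ZMod n) = 1 := by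
  simp [altSign]

theorem altSign_mul_self {n : ℕ} (x : ZMod n) : altSign x * altSign x = 1 := by
  rw [altSign, ← pow_add, Even.neg_one_pow ⟨_, rfl⟩]

theorem altSign_ne_zero {n : ℕ} (x : ZMod n) : altSign x ≠ 0 :=
  pow_ne_zero _ (by norm_num)

def pairShiftSum {n : ℕ} (a : ZMod n) (W : ZMod n → ℚ) (x : ZMod n) : ℚ :=
  W (x + a) + W (x - a) + W (x + (a + 1)) + W (x - (a + 1))

section altSign

variable {n : ℕ} [NeZero n]

theorem altSign_add (hn : Even n) (x y : ZMod n) : altSign (x + y) = altSign x * altSign y := by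
  rw [altSign, altSign, altSign, ← pow_add, neg_one_pow_eq_pow_mod_two, ZMod.val_add,
    Nat.mod_mod_of_dvd _ hn.two_dvd, ← neg_one_pow_eq_pow_mod_two]

theorem altSign_one (hn : Even n) : altSign (1 : ZMod n) = -1 := by
  have : 1 < n := by obtain ⟨m, rfl⟩ := hn; have := NeZero.ne (m + m); omega
  have : Fact (1 < n) := ⟨this⟩
  simp [altSign, ZMod.val_one]

theorem altSign_neg (hn : Even n) (x : ZMod n) : altSign (-x) = altSign x := by
  calc altSign (-x) = altSign x * altSign x * altSign (-x) := by rw [altSign_mul_self, one_mul]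
    _ = altSign x := by rw [mul_assoc, ← altSign_add hn, add_neg_cancel, altSign_zero, mul_one]

theorem altSign_sub (hn : Even n) (x y : ZMod n) : altSign (x - y) = altSign x * altSign y := by
  rw [sub_eq_add_neg, altSign_add hn, altSign_neg hn]

theorem eq_altSign_mul_of_add_eq_neg (hn : Even n) {c : ZMod n} (hc : IsUnit c)
    (hcs : altSign c = -1) {u : ZMod n → ℚ} (hu : ∀ x, u (x + c) = -u x) (x : ZMod n) :
    u x = altSign x * u 0 := by
  have hmul : ∀ k : ℕ, u (k • c) = altSign (k • c) * u 0 := by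
    intro k
    induction k with
    | zero => rw [zero_nsmul, altSign_zero, one_mul]
    | succ k ih => rw [succ_nsmul, hu, ih, altSign_add hn, hcs]; ring
  obtain ⟨k, rfl⟩ : ∃ k : ℕ, k • c = x :=
    ⟨(x * ↑hc.unit⁻¹).val, by
      rw [nsmul_eq_mul, ZMod.natCast_zmod_val, mul_assoc, IsUnit.val_inv_mul, mul_one]⟩
  exact hmul k

theorem sum_altSign_mul_add_add_one (hn : Even n) (W : ZMod n → ℚ) :
    ∑ x, altSign x * (W x + W (x + 1)) = 0 := by
  simp only [mul_add, sum_add_distrib]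
  have hshift : ∑ x, altSign x * W (x + 1) = -∑ x, altSign x * W x :=
    calc ∑ x, altSign x * W (x + 1) = ∑ x, altSign (x + 1 - 1) * W (x + 1) := by
          simp only [add_sub_cancel_right]
      _ = ∑ x, altSign (x - 1) * W x :=
          Fintype.sum_equiv (Equiv.addRight 1) _ _ fun _ => rfl
      _ = -∑ x, altSign x * W x := by
          rw [← sum_neg_distrib]
          simp only [altSign_sub hn, altSign_one hn, mul_neg_one, neg_mul]
  rw [hshift, add_neg_cancel]

theorem eq_smul_altSign_of_pairShiftSum_eq_zero (hn : Even n) {a : ZMod n}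
    (ha : IsUnit (2 * a + 1)) {W : ZMod n → ℚ} (hW : pairShiftSum a W = 0) :
    W = W 0 • altSign := by
  set u : ZMod n → ℚ := fun x => W x + W (x + 1) with hu_def
  have hu : ∀ x, u (x + (2 * a + 1)) = -u x := by
    intro x
    have := congrFun hW (x + (a + 1))
    simp only [pairShiftSum, Pi.zero_apply] at this
    simp only [hu_def]
    ring_nf at this ⊢
    linear_combination this
  have hcs : altSign (2 * a + 1) = -1 := by
    rw [two_mul, altSign_add hn, altSign_add hn, altSign_mul_self, altSign_one hn, one_mul]
  have hu_eq := eq_altSign_mul_of_add_eq_neg hn ha hcs hu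
  have hu0 : u 0 = 0 := by
    have hsum : ∑ x, altSign x * u x = n * u 0 := by
      rw [sum_congr rfl fun x _ => by rw [hu_eq x, ← mul_assoc, altSign_mul_self, one_mul],
        sum_const, card_univ, ZMod.card, nsmul_eq_mul]
    have hn0 : (n : ℚ) ≠ 0 := Nat.cast_ne_zero.mpr (NeZero.ne n)
    rw [← mul_right_inj' hn0, mul_zero, ← hsum]
    exact sum_altSign_mul_add_add_one hn W
  have hstep : ∀ x, W (x + 1) = -W x := by
    intro x
    have := hu_eq x
    rw [hu0, mul_zero] at this
    linear_combination this
  funext x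
  rw [eq_altSign_mul_of_add_eq_neg hn isUnit_one (altSign_one hn) hstep x, Pi.smul_apply,
    smul_eq_mul, mul_comm]

theorem pairShiftSum_altSign (hn : Even n) (a : ZMod n) : pairShiftSum a altSign = 0 := by
  funext x
  simp only [pairShiftSum, Pi.zero_apply, altSign_add hn, altSign_sub hn, altSign_one hn]
  ring

end altSign

def toZMod (n : ℕ) [NeZero n] : Fin n ≃ ZMod n where
  toFun i := (i.val : ZMod n)
  invFun x := ⟨x.val, x.val_lt⟩
  left_inv i := Fin.ext (ZMod.val_cast_of_lt i.isLt)
  right_inv := ZMod.natCast_zmod_val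

def connSet (n : ℕ) (S : Finset ℕ) : Finset (ZMod n) :=
  (S.image (fun s : ℕ => (s : ZMod n)) ∪ S.image (fun s : ℕ => -(s : ZMod n))).erase 0

theorem mem_connSet {n : ℕ} {S : Finset ℕ} {d : ZMod n} :
    d ∈ connSet n S ↔ d ≠ 0 ∧ ∃ s ∈ S, d = s ∨ d = -s := by
  simp only [connSet, mem_erase, mem_union, mem_image, ← exists_or, ← and_or_left, eq_comm]

theorem natCast_ne_zero_of_pos_of_lt {n k : ℕ} (h0 : 0 < k) (hk : k < n) :
    (k : ZMod n) ≠ 0 := by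
  rw [Ne, ZMod.natCast_eq_zero_iff]
  exact fun h => absurd (Nat.le_of_dvd h0 h) (by omega)

theorem connSet_pair {n a : ℕ} (ha : 1 ≤ a) (han : 2 * a + 2 < n) :
    connSet n {a, a + 1} =
      ({(a : ZMod n), -(a : ZMod n), (a : ZMod n) + 1, -((a : ZMod n) + 1)} : Finset (ZMod n)) := by
  have ha0 : (a : ZMod n) ≠ 0 := natCast_ne_zero_of_pos_of_lt (by omega) (by omega)
  have ha1 : (a : ZMod n) + 1 ≠ 0 := by
    exact_mod_cast natCast_ne_zero_of_pos_of_lt (k := a + 1) (by omega) (by omega)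
  ext d
  simp only [mem_connSet, mem_insert, mem_singleton, exists_eq_or_imp, exists_eq_left,
    Nat.cast_add, Nat.cast_one]
  constructor
  · tauto
  · rintro (rfl | rfl | rfl | rfl) <;> simp [ha0, ha1, -neg_add_rev]

theorem sum_connSet_pair {M : Type*} [AddCommMonoid M] {n a : ℕ} (ha : 1 ≤ a)
    (han : 2 * a + 2 < n) (f : ZMod n → M) :
    ∑ d ∈ connSet n {a, a + 1}, f d = f a + f (-a) + f (a + 1) + f (-(a + 1)) := by
  have hne : ∀ k : ℕ, 0 < k → k ≤ 2 * a + 2 → ∀ x y : ZMod n, x - y = k → x ≠ y :=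
    fun k h0 hk x y h hxy =>
      natCast_ne_zero_of_pos_of_lt (n := n) h0 (by omega) (by rw [← h, hxy, sub_self])
  rw [connSet_pair ha han, sum_insert, sum_insert, sum_insert, sum_singleton, ← add_assoc,
    ← add_assoc]
  all_goals simp only [mem_insert, mem_singleton, not_or]
  · exact hne (2 * a + 2) (by omega) le_rfl _ _ (by push_cast; ring)
  · exact ⟨(hne (2 * a + 1) (by omega) (by omega) _ _ (by push_cast; ring)).symm,
      hne 1 one_pos (by omega) _ _ (by push_cast; ring)⟩
  · exact ⟨hne (2 * a) (by omega) (by omega) _ _ (by push_cast; ring),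
      (hne 1 one_pos (by omega) _ _ (by push_cast; ring)).symm,
      hne (2 * a + 1) (by omega) (by omega) _ _ (by push_cast; ring)⟩

section circ

variable {n : ℕ} [NeZero n] {S : Finset ℕ}

theorem circ_adj_iff (i j : Fin n) :
    (circ n S).Adj i j ↔ toZMod n j - toZMod n i ∈ connSet n S := by
  have hswap : ∀ s : ZMod n, toZMod n i - toZMod n j = s ↔ toZMod n j - toZMod n i = -s :=
    fun s => by rw [← neg_sub, neg_eq_iff_eq_neg]
  rw [mem_connSet, sub_ne_zero, Ne, (toZMod n).injective.eq_iff, eq_comm]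
  simp only [← hswap, or_comm]
  rfl

open Classical in
theorem filter_circ_adj (i : Fin n) :
    univ.filter ((circ n S).Adj i) =
      (connSet n S).map ((Equiv.addLeft (toZMod n i)).trans (toZMod n).symm).toEmbedding := by
  ext j
  simp [circ_adj_iff, Equiv.symm_apply_eq, ← eq_sub_iff_add_eq']

theorem degOf_circ (i : Fin n) : degOf (circ n S) i = #(connSet n S) := by
  rw [degOf, filter_circ_adj, card_map]

theorem adjMat_circ_mulVec (w : Fin n → ℚ) (i : Fin n) :
    (adjMat (circ n S)).mulVec w i =
      ∑ d ∈ connSet n S, w ((toZMod n).symm (toZMod n i + d)) := by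
  classical
  simp only [Matrix.mulVec, dotProduct, adjMat, Matrix.of_apply, ite_mul, one_mul, zero_mul]
  rw [← sum_filter, filter_circ_adj, sum_map]
  rfl

theorem adjMat_circ_pair_mulVec {a : ℕ} (ha : 1 ≤ a) (han : 2 * a + 2 < n) (w : Fin n → ℚ)
    (i : Fin n) :
    (adjMat (circ n {a, a + 1})).mulVec w i =
      pairShiftSum (a : ZMod n) (w ∘ (toZMod n).symm) (toZMod n i) := by
  rw [adjMat_circ_mulVec, sum_connSet_pair ha han]
  simp only [pairShiftSum, Function.comp_apply, sub_eq_add_neg]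

theorem isRegularGraph_circ_pair {a : ℕ} (ha : 1 ≤ a) (han : 2 * a + 2 < n) :
    IsRegularGraph (circ n {a, a + 1}) 4 := fun i => by
  rw [degOf_circ, card_eq_sum_ones, sum_connSet_pair ha han]

theorem isNutGraph_circ_pair (hn : Even n) {a : ℕ} (ha : 1 ≤ a) (han : 2 * a + 2 < n)
    (hco : (2 * a + 1).Coprime n) : IsNutGraph (circ n {a, a + 1}) := by
  refine ⟨by omega, altSign ∘ toZMod n, fun i => altSign_ne_zero _, ?_, ?_⟩
  · funext i
    rw [adjMat_circ_pair_mulVec ha han, Function.comp_assoc, Equiv.self_comp_symm,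
      Function.comp_id, pairShiftSum_altSign hn, Pi.zero_apply, Pi.zero_apply]
  · intro w hw
    have hunit : IsUnit (2 * (a : ZMod n) + 1) := by
      exact_mod_cast (ZMod.isUnit_iff_coprime _ _).mpr hco
    have hW := eq_smul_altSign_of_pairShiftSum_eq_zero hn hunit (W := w ∘ (toZMod n).symm) <|
      funext fun x => by
        simpa [adjMat_circ_pair_mulVec ha han] using congrFun hw ((toZMod n).symm x)
    exact ⟨w ((toZMod n).symm 0), funext fun i => by simpa using congrFun hW (toZMod n i)⟩

end circ

theorem coprime_two_mul_sub_four_div_four_add_one {n : ℕ} (hn : Even n) (h4 : 4 ≤ n) :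
    (2 * ((n - 4) / 4) + 1).Coprime n := by
  set c := 2 * ((n - 4) / 4) + 1
  have hc4 : c.Coprime 4 := by
    simpa using (Nat.coprime_two_right.mpr (odd_two_mul_add_one _)).pow_right 2
  have hk : n - 2 * c ∣ 4 := by
    obtain ⟨m, rfl⟩ := hn
    rcases (by omega : m + m - 2 * c = 2 ∨ m + m - 2 * c = 4) with h | h <;> simp [h]
  rw [show n = (n - 2 * c) + 2 * c by omega, Nat.coprime_add_mul_right_right]
  exact hc4.coprime_dvd_right hk

end Circulant

/-- For every even `n ≥ 8` there exists `S ⊆ {1,…,n/2−1}` such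
that `Circ(n, S)` is a `4`-regular nut graph. -/
theorem exists_4_regular_circulant_nut
    (n : ℕ) (hn : 8 ≤ n) (hneven : Even n) :
    ∃ S : Finset ℕ, S ⊆ Finset.Icc 1 (n / 2 - 1) ∧
      IsNutGraph (circ n S) ∧ IsRegularGraph (circ n S) 4 := by
  have : NeZero n := ⟨by omega⟩
  set a := (n - 4) / 4
  have ha : 1 ≤ a := by omega
  have han : 2 * a + 2 < n := by omega
  refine ⟨{a, a + 1}, ?_, Circulant.isNutGraph_circ_pair hneven ha han
    (Circulant.coprime_two_mul_sub_four_div_four_add_one hneven (by omega)),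
    Circulant.isRegularGraph_circ_pair ha han⟩
  intro s hs
  rw [mem_insert, mem_singleton] at hs
  rw [mem_Icc]
  omega
end
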